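/- arXiv:2306.03869 — 7 statements merged into one kernel-verified Lean document; each statement's English description precedes it below -/
import Mathlib

section
/- Let r ≥ 1 and let P be a probability mass function on (Fin 6)^r (r rolls of a six-sided die) that is exchangeable, and suppose that for every integer s ≥ r there exists an exchangeable probability mass function P_s on (Fin 6)^s whose marginal on the first r coordinates equals P (i.e., P(t) = ∑_{u : Fin (s-r) → Fin 6} P_s(t ++ u) for all t). Then there exists a Borel probability measure q on the simplex Θ = {θ ∈ ℝ^6 : θ_i ≥ 0 for all i, ∑_{i=1}^{6} θ_i = 1} such that for every t : Fin r → Fin 6, P(t) = ∫_Θ ∏_{k=1}^{r} θ_{t(k)} dq(θ). -/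
/-!
Diaconis–Freedman. Let `Ps` be an exchangeable law on `s ≥ r` rolls extending `P`. By
exchangeability the law of `v ∘ f` under `Ps` is `P` for every injective `f : Fin r → Fin s`,
so `P` is the law of `r` draws without replacement from the urn `v`. Averaging over all `f`
instead gives draws with replacement, i.e. the mixture under `Ps` of the i.i.d. laws with the
empirical frequencies of `v` as parameter. The two averages differ only on the non-injective
`f`, a fraction at most `r² / s` of all maps. Hence `P` lies in the closure of the convex hull of
the i.i.d. laws, which is compact by Carathéodory, so `P` is a finite mixture of them.
-/

open MeasureTheory

/-- The standard probability simplex in `ℝ^6`. -/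
abbrev Simplex6 : Type := {θ : Fin 6 → ℝ // (∀ i, 0 ≤ θ i) ∧ ∑ i, θ i = 1}

open Finset Function

theorem IsCompact.convexHull {E : Type*} [NormedAddCommGroup E] [NormedSpace ℝ E]
    [FiniteDimensional ℝ E] {K : Set E} (hK : IsCompact K) :
    IsCompact (convexHull ℝ K) := by
  rcases K.eq_empty_or_nonempty with rfl | ⟨x₀, hx₀⟩
  · simp
  let m := Module.finrank ℝ E + 1
  let combination : (Fin m → ℝ) × (Fin m → E) → E := fun p => ∑ i, p.1 i • p.2 i
  suffices _root_.convexHull ℝ K =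
      combination '' (stdSimplex ℝ (Fin m) ×ˢ Set.univ.pi fun _ => K) from
    this ▸ ((isCompact_stdSimplex ℝ _).prod (isCompact_univ_pi fun _ => hK)).image
      (by fun_prop)
  refine subset_antisymm (fun x hx => ?_) ?_
  · obtain ⟨ι, _, z, w, hzK, hz, hw0, hw1, rfl⟩ := eq_pos_convex_span_of_mem_convexHull hx
    obtain ⟨e⟩ : Nonempty (ι ↪ Fin m) := Function.Embedding.nonempty_of_card_le <|
      hz.card_le_finrank_succ.trans (by simpa [m] using Submodule.finrank_le _)
    have hout : ∀ j ∉ Set.range e, extend e w 0 j = 0 := fun j hj =>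
      extend_apply' _ _ _ (by simpa using hj)
    refine ⟨(extend e w 0, extend e z fun _ => x₀), ⟨⟨fun j => ?_, ?_⟩, fun j _ => ?_⟩, ?_⟩
    · by_cases hj : j ∈ Set.range e
      · obtain ⟨i, rfl⟩ := hj
        simpa [e.injective.extend_apply] using (hw0 i).le
      · simp [hout j hj]
    · rw [← hw1]
      exact (Fintype.sum_of_injective e e.injective _ _ hout
        fun i => (e.injective.extend_apply _ _ i).symm).symm
    · by_cases hj : ∃ i, e i = j
      · obtain ⟨i, rfl⟩ := hj
        simpa [e.injective.extend_apply] using hzK (Set.mem_range_self i)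
      · simpa [extend_apply' _ _ _ hj] using hx₀
    · refine (Fintype.sum_of_injective e e.injective _ _ (fun j hj => ?_)
        fun i => by simp [e.injective.extend_apply]).symm
      simp [hout j hj]
  · rintro _ ⟨p, ⟨hw, hz⟩, rfl⟩
    exact (convex_convexHull ℝ K).sum_mem (fun i _ => hw.1 i) hw.2
      fun i _ => subset_convexHull ℝ K (hz i trivial)

theorem exists_isProbabilityMeasure_integral_eq_of_mem_convexHull {X ι : Type*}
    [MeasurableSpace X] [MeasurableSingletonClass X] {φ : X → ι → ℝ} {p : ι → ℝ}
    (hp : p ∈ convexHull ℝ (Set.range φ)) :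
    ∃ q : Measure X, IsProbabilityMeasure q ∧ ∀ i, p i = ∫ x, φ x i ∂q := by
  obtain ⟨κ, _, w, z, hw0, hw1, hz, rfl⟩ := mem_convexHull_iff_exists_fintype.1 hp
  choose x hx using hz
  refine ⟨∑ k, ENNReal.ofReal (w k) • Measure.dirac (x k), ⟨?_⟩, fun i => ?_⟩
  · simp [← ENNReal.ofReal_sum_of_nonneg fun k _ => hw0 k, hw1]
  · rw [integral_finsetSum_measure fun k _ => (integrable_dirac (by simp)).smul_measure
      ENNReal.ofReal_ne_top]
    simp [integral_smul_measure, ENNReal.toReal_ofReal (hw0 _), hx]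

variable {α β ι : Type*}

section iidLaw

variable [Fintype α]

def iidLaw (r : ℕ) (θ : stdSimplex ℝ α) (t : Fin r → α) : ℝ := ∏ k, θ.1 (t k)

theorem continuous_iidLaw (r : ℕ) : Continuous (iidLaw (α := α) r) :=
  continuous_pi fun t => continuous_finsetProd _ fun k _ =>
    (continuous_apply (t k)).comp continuous_subtype_val

theorem isCompact_convexHull_range_iidLaw (r : ℕ) :
    IsCompact (convexHull ℝ (Set.range (iidLaw (α := α) r))) :=
  haveI := isCompact_iff_compactSpace.1 (isCompact_stdSimplex ℝ α)
  (isCompact_range (continuous_iidLaw r)).convexHull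

end iidLaw

section marginal

variable [Fintype α] [DecidableEq α] [Fintype β] [DecidableEq β] [Fintype ι]

def marginal (Ps : (β → α) → ℝ) (f : ι → β) (t : ι → α) : ℝ :=
  ∑ v with v ∘ f = t, Ps v

variable {Ps : (β → α) → ℝ}

theorem marginal_nonneg (hPs : ∀ v, 0 ≤ Ps v) (f : ι → β) (t : ι → α) :
    0 ≤ marginal Ps f t :=
  sum_nonneg fun v _ => hPs v

theorem marginal_le_one (hPs : ∀ v, 0 ≤ Ps v) (hPs1 : ∑ v, Ps v = 1) (f : ι → β)
    (t : ι → α) : marginal Ps f t ≤ 1 :=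
  hPs1 ▸ sum_le_univ_sum_of_nonneg hPs

theorem marginal_perm_comp (hexch : ∀ (σ : Equiv.Perm β) v, Ps (v ∘ σ) = Ps v)
    (σ : Equiv.Perm β) (f : ι → β) : marginal Ps (σ ∘ f) = marginal Ps f := by
  ext t
  exact sum_equiv (σ.symm.arrowCongr (Equiv.refl α)) (fun _ => by simp only [mem_filter_univ]; rfl)
    fun v _ => (hexch σ v).symm

theorem marginal_eq_of_injective (hexch : ∀ (σ : Equiv.Perm β) v, Ps (v ∘ σ) = Ps v)
    {f g : ι → β} (hf : Injective f) (hg : Injective g) :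
    marginal Ps f = marginal Ps g := by
  obtain ⟨σ, hσ⟩ := Equiv.Perm.exists_extending_pair g f hg hf
  rw [← marginal_perm_comp hexch σ g]
  exact congrArg _ (funext fun i => (hσ i).symm)

end marginal

theorem sum_append_eq_marginal [Fintype α] [DecidableEq α] {m n s : ℕ} (h : s = m + n)
    (Ps : (Fin s → α) → ℝ) (t : Fin m → α) :
    ∑ u : Fin n → α, Ps (Fin.append t u ∘ Fin.cast h) =
      marginal Ps (Fin.cast h.symm ∘ Fin.castAdd n) t := by
  let e := (Fin.appendEquiv m n).trans (Equiv.arrowCongr (finCongr h.symm) (Equiv.refl α))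
  have he : ∀ a u, e (a, u) = Fin.append a u ∘ Fin.cast h := fun _ _ => rfl
  have hrestrict : ∀ a u, e (a, u) ∘ (Fin.cast h.symm ∘ Fin.castAdd n) = a := fun a u =>
    funext fun i => by simp [he]
  rw [marginal, sum_filter, ← e.sum_comp, Fintype.sum_prod_type, sum_eq_single t]
  · simp only [hrestrict, ↓reduceIte]; rfl
  · exact fun a _ ha => sum_eq_zero fun u _ => by simp [hrestrict, ha]
  · simp

theorem card_filter_comp_eq [Fintype β] [Fintype ι] [DecidableEq ι]
    [DecidableEq α] (v : β → α) (t : ι → α) :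
    #{f : ι → β | v ∘ f = t} = ∏ k, #{j | v j = t k} := by
  rw [← Fintype.card_piFinset]
  congr 1
  ext f
  simp [funext_iff]

theorem card_not_injective_div_le {r s : ℕ} (hrs : r ≤ s) (hs : 0 < s) :
    (#{f : Fin r → Fin s | ¬ Injective f} : ℝ) / s ^ r ≤ r ^ 2 / s := by
  have hinj : #{f : Fin r → Fin s | Injective f} = s.descFactorial r := by
    rw [← Fintype.card_subtype, Fintype.card_congr (Equiv.subtypeInjectiveEquivEmbedding _ _),
      Fintype.card_embedding_eq]
    simp
  have hsplit := card_filter_add_card_filter_not (s := univ) fun f : Fin r → Fin s => Injective f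
  simp only [card_univ, Fintype.card_fun, Fintype.card_fin, hinj] at hsplit
  have hsR : (0 : ℝ) < s := by exact_mod_cast hs
  have hbernoulli : (s : ℝ) ^ r * (1 + r * ((1 - r) / s)) ≤ s.descFactorial r :=
    calc (s : ℝ) ^ r * (1 + r * ((1 - r) / s))
        ≤ s ^ r * (1 + (1 - r) / s) ^ r := by
          gcongr
          refine one_add_mul_le_pow ?_ r
          rw [le_div_iff₀ hsR]
          have : (r : ℝ) ≤ s := by exact_mod_cast hrs
          linarith
      _ = ((s + 1 - r : ℕ) : ℝ) ^ r := by
          rw [← mul_pow, Nat.cast_sub (by omega)]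
          push_cast
          field_simp
          ring
      _ ≤ s.descFactorial r := by exact_mod_cast Nat.pow_sub_le_descFactorial s r
  have hN : (#{f : Fin r → Fin s | ¬ Injective f} : ℝ) = s ^ r - s.descFactorial r := by
    rw [eq_sub_iff_add_eq']; exact_mod_cast hsplit
  rw [hN, div_le_div_iff₀ (by positivity) hsR]
  have : (s : ℝ) ^ r * (1 + r * ((1 - r) / s)) * s = s ^ r * (s + r - r ^ 2) := by
    field_simp; ring
  nlinarith [pow_pos hsR r]

section empirical

variable [Fintype α] [DecidableEq α] {r s : ℕ} [NeZero s]

noncomputable def empirical (v : Fin s → α) : stdSimplex ℝ α :=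
  ⟨fun a => #{j | v j = a} / s, fun a => by positivity, by
    rw [← sum_div, ← Nat.cast_sum, sum_card_fiberwise_eq_card_filter]
    simp [NeZero.ne]⟩

theorem sum_marginal_eq_mixture (Ps : (Fin s → α) → ℝ) (t : Fin r → α) :
    ∑ f : Fin r → Fin s, marginal Ps f t = s ^ r * ∑ v, Ps v * iidLaw r (empirical v) t := by
  have hs : (s : ℝ) ≠ 0 := NeZero.ne _
  calc ∑ f : Fin r → Fin s, marginal Ps f t
      = ∑ v, Ps v * #{f : Fin r → Fin s | v ∘ f = t} := by
        simp only [marginal, sum_filter]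
        rw [sum_comm]
        simp [← sum_filter, mul_comm]
    _ = s ^ r * ∑ v, Ps v * iidLaw r (empirical v) t := by
        rw [mul_sum]
        refine sum_congr rfl fun v _ => ?_
        simp only [card_filter_comp_eq, iidLaw, empirical, prod_div_distrib, prod_const,
          card_univ, Fintype.card_fin, Nat.cast_prod]
        field_simp

theorem exists_mem_convexHull_dist_marginal_le {Ps : (Fin s → α) → ℝ} (hPs0 : ∀ v, 0 ≤ Ps v)
    (hPs1 : ∑ v, Ps v = 1) (hexch : ∀ (σ : Equiv.Perm (Fin s)) v, Ps (v ∘ σ) = Ps v)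
    {e : Fin r → Fin s} (he : Injective e) :
    ∃ y ∈ convexHull ℝ (Set.range (iidLaw (α := α) r)), dist (marginal Ps e) y ≤ r ^ 2 / s := by
  have hs : (0 : ℝ) < s := by exact_mod_cast NeZero.pos s
  have hrs : r ≤ s := by simpa using Fintype.card_le_of_injective e he
  refine ⟨∑ v, Ps v • iidLaw r (empirical v), (convex_convexHull ℝ _).sum_mem
    (fun v _ => hPs0 v) hPs1 fun v _ => subset_convexHull ℝ _ (Set.mem_range_self _),
    (dist_pi_le_iff (by positivity)).2 fun t => ?_⟩
  have hdiff : marginal Ps e t - (∑ v, Ps v • iidLaw r (empirical v)) t =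
      (∑ f : Fin r → Fin s, (marginal Ps e t - marginal Ps f t)) / s ^ r := by
    rw [sum_sub_distrib, sum_marginal_eq_mixture, sum_const, card_univ, Fintype.card_fun,
      Fintype.card_fin, Fintype.card_fin, nsmul_eq_mul]
    simp only [Finset.sum_apply, Pi.smul_apply, smul_eq_mul]
    field_simp
    push_cast
    ring
  have hterm : ∀ f : Fin r → Fin s,
      |marginal Ps e t - marginal Ps f t| ≤ if Injective f then 0 else 1 := by
    intro f
    split_ifs with hf
    · simp [marginal_eq_of_injective hexch he hf]
    · simpa using abs_sub_le_of_le_of_le (marginal_nonneg hPs0 e t)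
        (marginal_le_one hPs0 hPs1 e t) (marginal_nonneg hPs0 f t) (marginal_le_one hPs0 hPs1 f t)
  rw [Real.dist_eq, hdiff, abs_div, abs_of_pos (pow_pos hs r)]
  calc |∑ f : Fin r → Fin s, (marginal Ps e t - marginal Ps f t)| / s ^ r
      ≤ (∑ f : Fin r → Fin s, if Injective f then (0 : ℝ) else 1) / s ^ r := by
        gcongr
        exact (abs_sum_le_sum_abs _ _).trans (sum_le_sum fun f _ => hterm f)
    _ = #{f : Fin r → Fin s | ¬ Injective f} / s ^ r := by
        rw [sum_ite, sum_const_zero, zero_add, sum_const, nsmul_one]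
    _ ≤ r ^ 2 / s := card_not_injective_div_le hrs (NeZero.pos s)

end empirical

/-- **Classical de Finetti representation theorem** (Proposition 1):
an infinitely exchangeable probability mass function on `r` rolls of a
six-sided die is a mixture of i.i.d. product distributions. -/
theorem deFinetti_infinite_exchangeable
    (r : ℕ) (P : (Fin r → Fin 6) → ℝ)
    (hext : ∀ (s : ℕ) (hs : r ≤ s),
      ∃ Ps : (Fin s → Fin 6) → ℝ,
        (∀ u, 0 ≤ Ps u) ∧ (∑ u, Ps u = 1) ∧
        (∀ (σ : Equiv.Perm (Fin s)) (u : Fin s → Fin 6), Ps (u ∘ σ) = Ps u) ∧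
        (∀ t : Fin r → Fin 6,
          P t = ∑ u : Fin (s - r) → Fin 6,
            Ps (Fin.append t u ∘ Fin.cast (by omega : s = r + (s - r))))) :
    ∃ q : Measure Simplex6, IsProbabilityMeasure q ∧
      ∀ t : Fin r → Fin 6,
        P t = ∫ θ : Simplex6, ∏ k : Fin r, (θ : Fin 6 → ℝ) (t k) ∂q := by
  suffices P ∈ closure (convexHull ℝ (Set.range (iidLaw (α := Fin 6) r))) by
    rw [(isCompact_convexHull_range_iidLaw r).isClosed.closure_eq] at this
    exact exists_isProbabilityMeasure_integral_eq_of_mem_convexHull this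
  refine Metric.mem_closure_iff.2 fun ε hε => ?_
  obtain ⟨m, hm⟩ := exists_nat_gt ((r : ℝ) ^ 2 / ε)
  have hm0 : 0 < m := by exact_mod_cast (div_nonneg (sq_nonneg (r : ℝ)) hε.le).trans_lt hm
  set s := max r m
  have : NeZero s := ⟨(hm0.trans_le (le_max_right r m)).ne'⟩
  obtain ⟨Ps, hPs0, hPs1, hexch, hmarg⟩ := hext s (le_max_left r m)
  have hP : P = marginal Ps (Fin.cast _ ∘ Fin.castAdd (s - r)) :=
    funext fun t => (hmarg t).trans (sum_append_eq_marginal _ Ps t)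
  obtain ⟨y, hy, hdist⟩ := exists_mem_convexHull_dist_marginal_le hPs0 hPs1 hexch
    ((Fin.cast_injective _).comp (Fin.castAdd_injective r (s - r)))
  refine ⟨y, hy, hP ▸ hdist.trans_lt ?_⟩
  have hms : (m : ℝ) ≤ s := by exact_mod_cast le_max_right r m
  rw [div_lt_iff₀ hε] at hm
  rw [div_lt_iff₀ (by exact_mod_cast NeZero.pos s)]
  nlinarith
end

section
/- Let r ≥ 1 and let P be an exchangeable probability mass function on (Fin 6)^r. Then there exist two finite Borel measures μ₊ and μ₋ on the simplex Θ = {θ ∈ ℝ^6 : θ_i ≥ 0, ∑_{i=1}^{6} θ_i = 1} with μ₊(Θ) − μ₋(Θ) = 1 (a signed measure ν = μ₊ − μ₋ of total mass 1), such that for every t : Fin r → Fin 6, P(t) = ∫_Θ ∏_{k=1}^{r} θ_{t(k)} dμ₊(θ) − ∫_Θ ∏_{k=1}^{r} θ_{t(k)} dμ₋(θ). -/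
open MeasureTheory

/-- Uniqueness of base-`b` digits. -/
lemma digits_unique : ∀ (n b : ℕ) (a a' : Fin n → ℕ), (∀ i, a i < b) → (∀ i, a' i < b) →
    (∑ i, a i * b ^ (i : ℕ)) = (∑ i, a' i * b ^ (i : ℕ)) → a = a' := by
  intro n
  induction n with
  | zero => intro b a a' _ _ _; funext i; exact i.elim0
  | succ n ih =>
    intro b a a' ha ha' hsum
    have expand : ∀ c : Fin (n+1) → ℕ,
        (∑ i, c i * b ^ (i : ℕ)) = c 0 + b * ∑ i : Fin n, c i.succ * b ^ (i : ℕ) := by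
      intro c
      rw [Fin.sum_univ_succ, Finset.mul_sum]
      simp only [Fin.val_zero, pow_zero, mul_one, Fin.val_succ, pow_succ]
      congr 1
      exact Finset.sum_congr rfl fun i _ => by ring
    rw [expand a, expand a'] at hsum
    have hb : 0 < b := Nat.pos_of_ne_zero (by rintro rfl; exact Nat.not_lt_zero _ (ha 0))
    have h0 : a 0 = a' 0 := by
      have := congrArg (· % b) hsum
      simpa [Nat.add_mul_mod_self_left, Nat.mod_eq_of_lt (ha 0), Nat.mod_eq_of_lt (ha' 0)] using this
    have htail : (fun i : Fin n => a i.succ) = (fun i : Fin n => a' i.succ) := by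
      apply ih b _ _ (fun i => ha i.succ) (fun i => ha' i.succ)
      have : b * (∑ i : Fin n, a i.succ * b ^ (i : ℕ)) = b * ∑ i : Fin n, a' i.succ * b ^ (i : ℕ) := by
        omega
      exact Nat.eq_of_mul_eq_mul_left hb this
    funext i
    refine Fin.cases h0 (fun j => ?_) i
    exact congrFun htail j

/-- Two tuples with equal fiber counts differ by a permutation. -/
lemma exists_perm_of_count_eq {r : ℕ} (t s : Fin r → Fin 6)
    (h : ∀ i, (Finset.univ.filter fun k => t k = i).card
            = (Finset.univ.filter fun k => s k = i).card) :
    ∃ τ : Equiv.Perm (Fin r), t = s ∘ τ := by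
  have fib : ∀ i : Fin 6, {k // t k = i} ≃ {k // s k = i} := fun i =>
    Fintype.equivOfCardEq (by simp only [Fintype.card_subtype]; exact h i)
  refine ⟨(Equiv.sigmaFiberEquiv t).symm.trans
    ((Equiv.sigmaCongrRight fib).trans (Equiv.sigmaFiberEquiv s)), ?_⟩
  funext k
  simp only [Function.comp_apply, Equiv.trans_apply, Equiv.sigmaFiberEquiv,
    Equiv.sigmaCongrRight, Equiv.coe_fn_mk, Equiv.coe_fn_symm_mk]
  exact ((fib (t k)) ⟨k, rfl⟩).2.symm

lemma key_annihilate {r : ℕ} (c P : (Fin r → Fin 6) → ℝ)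
    (hc : ∀ θ : Simplex6, ∑ t, c t * ∏ k, θ.1 (t k) = 0)
    (hP : ∀ (σ : Equiv.Perm (Fin r)) (t : Fin r → Fin 6), P (t ∘ σ) = P t) :
    ∑ t, c t * P t = 0 := by
  classical
  set c' : (Fin r → Fin 6) → ℝ := fun t => ∑ σ : Equiv.Perm (Fin r), c (t ∘ σ) with hc'def
  have precomp : ∀ σ : Equiv.Perm (Fin r), ∀ g : (Fin r → Fin 6) → ℝ,
      ∑ t : Fin r → Fin 6, g (t ∘ σ) = ∑ t, g t := by
    intro σ g
    exact Fintype.sum_equiv (Equiv.arrowCongr σ.symm (Equiv.refl (Fin 6)))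
      (fun t => g (t ∘ σ)) g (fun t => rfl)
  -- Step 1
  have step1 : ∑ t, c' t * P t
      = (Fintype.card (Equiv.Perm (Fin r)) : ℝ) * ∑ t, c t * P t := by
    have h1 : ∀ σ : Equiv.Perm (Fin r),
        (∑ t : Fin r → Fin 6, c (t ∘ σ) * P t) = ∑ t, c t * P t := by
      intro σ
      calc (∑ t : Fin r → Fin 6, c (t ∘ σ) * P t)
          = ∑ t : Fin r → Fin 6, c (t ∘ σ) * P ((t ∘ σ) ∘ ⇑σ.symm) := by
            refine Finset.sum_congr rfl fun t _ => ?_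
            have hts : (t ∘ ⇑σ) ∘ ⇑σ.symm = t := by funext k; simp
            rw [hts]
        _ = ∑ t : Fin r → Fin 6, c t * P (t ∘ ⇑σ.symm) :=
            precomp σ (fun t => c t * P (t ∘ ⇑σ.symm))
        _ = ∑ t, c t * P t := by
            refine Finset.sum_congr rfl fun t _ => ?_
            rw [hP σ.symm]
    calc ∑ t, c' t * P t
        = ∑ σ : Equiv.Perm (Fin r), ∑ t : Fin r → Fin 6, c (t ∘ σ) * P t := by
          simp only [hc'def, Finset.sum_mul]
          exact Finset.sum_comm
      _ = ∑ _σ : Equiv.Perm (Fin r), ∑ t, c t * P t :=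
          Finset.sum_congr rfl fun σ _ => h1 σ
      _ = (Fintype.card (Equiv.Perm (Fin r)) : ℝ) * ∑ t, c t * P t := by
          rw [Finset.sum_const, nsmul_eq_mul]; rfl
  -- Step 2
  have hc'0 : ∀ θ : Simplex6, ∑ t, c' t * ∏ k, θ.1 (t k) = 0 := by
    intro θ
    have h1 : ∀ σ : Equiv.Perm (Fin r),
        (∑ t : Fin r → Fin 6, c (t ∘ σ) * ∏ k, θ.1 (t k)) = 0 := by
      intro σ
      calc (∑ t : Fin r → Fin 6, c (t ∘ σ) * ∏ k, θ.1 (t k))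
          = ∑ t : Fin r → Fin 6, c (t ∘ σ) * ∏ k, θ.1 ((t ∘ σ) k) := by
            refine Finset.sum_congr rfl fun t _ => ?_
            congr 1
            exact (Equiv.prod_comp σ fun k => θ.1 (t k)).symm
        _ = ∑ t : Fin r → Fin 6, c t * ∏ k, θ.1 (t k) :=
            precomp σ (fun t => c t * ∏ k, θ.1 (t k))
        _ = 0 := hc θ
    calc ∑ t, c' t * ∏ k, θ.1 (t k)
        = ∑ σ : Equiv.Perm (Fin r), ∑ t : Fin r → Fin 6, c (t ∘ σ) * ∏ k, θ.1 (t k) := by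
          simp only [hc'def, Finset.sum_mul]
          exact Finset.sum_comm
      _ = 0 := by
          rw [Finset.sum_eq_zero fun σ _ => h1 σ]
  -- Step 3 : invariance under equal counts
  have inv : ∀ t s : Fin r → Fin 6,
      (∀ i, (Finset.univ.filter fun k => t k = i).card
          = (Finset.univ.filter fun k => s k = i).card) → c' t = c' s := by
    intro t s h
    obtain ⟨τ, ht⟩ := exists_perm_of_count_eq t s h
    subst ht
    simp only [hc'def]
    refine Fintype.sum_equiv (Equiv.mulLeft τ) _ _ fun σ => ?_
    congr 1
  -- Step 4 : encoding
  set code : (Fin r → Fin 6) → ℕ := fun t => ∑ k : Fin r, (r+1) ^ ((t k : ℕ)) with hcode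
  have codecount : ∀ t : Fin r → Fin 6,
      code t = ∑ i : Fin 6, (Finset.univ.filter fun k => t k = i).card * (r+1) ^ (i : ℕ) := by
    intro t
    show (∑ k : Fin r, (r+1) ^ ((t k : ℕ))) = _
    rw [← Finset.sum_fiberwise Finset.univ t (fun k => (r+1) ^ ((t k : ℕ)))]
    refine Finset.sum_congr rfl fun i _ => ?_
    rw [Finset.sum_congr rfl (fun k hk => ?_), Finset.sum_const, smul_eq_mul]
    rw [(Finset.mem_filter.mp hk).2]
  -- Step 5 : the one-variable polynomial
  set p : Polynomial ℝ := ∑ t : Fin r → Fin 6, Polynomial.C (c' t) * Polynomial.X ^ (code t)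
    with hp
  have heval : ∀ z : ℝ, 0 < z → p.eval z = 0 := by
    intro z hz
    set w : Fin 6 → ℝ := fun i => z ^ ((r+1) ^ (i : ℕ)) with hw
    have hwpos : ∀ i, 0 < w i := fun i => pow_pos hz _
    set S : ℝ := ∑ i, w i with hS
    have hSpos : 0 < S := Finset.sum_pos (fun i _ => hwpos i) ⟨0, Finset.mem_univ 0⟩
    set θ : Simplex6 := ⟨fun i => w i / S,
      ⟨fun i => div_nonneg (hwpos i).le hSpos.le, by rw [← Finset.sum_div, ← hS, div_self hSpos.ne']⟩⟩
      with hθ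
    have key := hc'0 θ
    have hpow : ∀ t : Fin r → Fin 6, z ^ (code t) = ∏ k, w (t k) := by
      intro t
      rw [hcode]
      exact (Finset.prod_pow_eq_pow_sum Finset.univ (fun k => (r+1) ^ ((t k : ℕ))) z).symm
    have hprod : ∀ t : Fin r → Fin 6,
        (∏ k, θ.1 (t k)) * S ^ r = ∏ k, w (t k) := by
      intro t
      have : (∏ k : Fin r, θ.1 (t k)) = (∏ k : Fin r, w (t k)) / S ^ r := by
        rw [hθ]
        simp only
        rw [Finset.prod_div_distrib, Finset.prod_const, Finset.card_univ, Fintype.card_fin]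
      rw [this, div_mul_cancel₀ _ (pow_ne_zero r hSpos.ne')]
    calc p.eval z = ∑ t : Fin r → Fin 6, c' t * z ^ (code t) := by
          rw [hp, Polynomial.eval_finset_sum]
          simp
      _ = ∑ t : Fin r → Fin 6, c' t * ((∏ k, θ.1 (t k)) * S ^ r) := by
          refine Finset.sum_congr rfl fun t _ => ?_
          rw [hpow t, hprod t]
      _ = (∑ t, c' t * ∏ k, θ.1 (t k)) * S ^ r := by
          rw [Finset.sum_mul]
          exact Finset.sum_congr rfl fun t _ => by ring
      _ = 0 := by rw [key, zero_mul]
  have hp0 : p = 0 := by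
    refine Polynomial.eq_zero_of_infinite_isRoot p ?_
    refine Set.Infinite.mono ?_ (Set.Ioi_infinite (0:ℝ))
    intro z hz
    exact heval z hz
  -- Step 6 : all symmetrized coefficients vanish
  have hc'zero : ∀ t₀ : Fin r → Fin 6, c' t₀ = 0 := by
    intro t₀
    have hcoeff : p.coeff (code t₀)
        = ∑ t ∈ Finset.univ.filter (fun t : Fin r → Fin 6 => code t = code t₀), c' t := by
      rw [hp, Polynomial.finset_sum_coeff]
      rw [Finset.sum_filter]
      refine Finset.sum_congr rfl fun t _ => ?_
      rw [Polynomial.coeff_C_mul, Polynomial.coeff_X_pow, mul_ite, mul_one, mul_zero]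
      simp only [eq_comm]
    have hsame : ∀ t ∈ Finset.univ.filter (fun t : Fin r → Fin 6 => code t = code t₀),
        c' t = c' t₀ := by
      intro t ht
      have hcodeeq : code t = code t₀ := (Finset.mem_filter.mp ht).2
      have hbound : ∀ (s : Fin r → Fin 6) (i : Fin 6),
          (Finset.univ.filter fun k => s k = i).card < r + 1 := by
        intro s i
        have := Finset.card_filter_le (Finset.univ : Finset (Fin r)) (fun k => s k = i)
        simpa using Nat.lt_succ_of_le this
      have := digits_unique 6 (r+1)
        (fun i => (Finset.univ.filter fun k => t k = i).card)
        (fun i => (Finset.univ.filter fun k => t₀ k = i).card)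
        (fun i => hbound t i) (fun i => hbound t₀ i)
        (by rw [← codecount t, ← codecount t₀, hcodeeq])
      exact inv t t₀ (fun i => congrFun this i)
    have hcard : (Finset.univ.filter (fun t : Fin r → Fin 6 => code t = code t₀)).Nonempty :=
      ⟨t₀, Finset.mem_filter.mpr ⟨Finset.mem_univ _, rfl⟩⟩
    have hco : p.coeff (code t₀)
        = ((Finset.univ.filter (fun t : Fin r → Fin 6 => code t = code t₀)).card : ℝ) * c' t₀ := by
      rw [hcoeff, Finset.sum_congr rfl hsame, Finset.sum_const, nsmul_eq_mul]
    rw [hp0, Polynomial.coeff_zero] at hco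
    have : (0:ℝ) = (Finset.univ.filter (fun t : Fin r → Fin 6 => code t = code t₀)).card * c' t₀ := hco
    have hcardpos : (0:ℝ) < (Finset.univ.filter (fun t : Fin r → Fin 6 => code t = code t₀)).card := by
      exact_mod_cast Finset.card_pos.mpr hcard
    have := this.symm
    rcases mul_eq_zero.mp this with h | h
    · exact absurd h hcardpos.ne'
    · exact h
  -- conclude
  have : (Fintype.card (Equiv.Perm (Fin r)) : ℝ) * ∑ t, c t * P t = 0 := by
    rw [← step1, Finset.sum_eq_zero fun t _ => by rw [hc'zero t, zero_mul]]
  have hcard : (Fintype.card (Equiv.Perm (Fin r)) : ℝ) ≠ 0 := by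
    exact_mod_cast Fintype.card_pos.ne'
  exact (mul_eq_zero.mp this).resolve_left hcard

lemma integrable_dirac_simple {α : Type*} [MeasurableSpace α] [MeasurableSingletonClass α]
    (f : α → ℝ) (a : α) : Integrable f (Measure.dirac a) := by
  have h : f =ᵐ[Measure.dirac a] fun _ => f a := by
    rw [Filter.EventuallyEq, MeasureTheory.ae_dirac_eq]
    exact Filter.eventually_pure.mpr rfl
  exact (integrable_const (f a)).congr h.symm

/-- **de Finetti representation with a signed mixing measure** (Proposition 2,
Kerns–Székely): every finitely exchangeable probability mass function on
`r` rolls of a six-sided die is a mixture of i.i.d. product distributions with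
respect to a signed measure `ν = μ₊ − μ₋` of total mass one. -/
theorem deFinetti_finite_exchangeable_signed
    (r : ℕ) (hr : 1 ≤ r) (P : (Fin r → Fin 6) → ℝ)
    (hPnonneg : ∀ t, 0 ≤ P t) (hPsum : ∑ t, P t = 1)
    (hPexch : ∀ (σ : Equiv.Perm (Fin r)) (t : Fin r → Fin 6), P (t ∘ σ) = P t) :
    ∃ (μp μm : Measure Simplex6), IsFiniteMeasure μp ∧ IsFiniteMeasure μm ∧
      (μp Set.univ).toReal - (μm Set.univ).toReal = 1 ∧
      ∀ t : Fin r → Fin 6,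
        P t = (∫ θ : Simplex6, ∏ k : Fin r, (θ : Fin 6 → ℝ) (t k) ∂μp)
            - (∫ θ : Simplex6, ∏ k : Fin r, (θ : Fin 6 → ℝ) (t k) ∂μm) := by
  classical
  set m : Simplex6 → ((Fin r → Fin 6) → ℝ) := fun θ t => ∏ k, θ.1 (t k) with hm
  -- P lies in the span of the product functions
  have hmem : P ∈ Submodule.span ℝ (Set.range m) := by
    by_contra hnot
    set W : Submodule ℝ ((Fin r → Fin 6) → ℝ) := Submodule.span ℝ (Set.range m) with hW
    have hne : (Submodule.Quotient.mk P : _ ⧸ W) ≠ 0 :=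
      fun h => hnot ((Submodule.Quotient.mk_eq_zero W).mp h)
    have := (Module.forall_dual_apply_eq_zero_iff ℝ (Submodule.Quotient.mk P : _ ⧸ W)).not.mpr hne
    push_neg at this
    obtain ⟨g, hg⟩ := this
    set f : Module.Dual ℝ ((Fin r → Fin 6) → ℝ) := g.comp W.mkQ with hf
    set c : (Fin r → Fin 6) → ℝ := fun t => f (Pi.single t 1) with hcdef
    have hrepr : ∀ v : (Fin r → Fin 6) → ℝ, f v = ∑ t, v t * c t := by
      intro v
      conv_lhs => rw [← Finset.univ_sum_single v]
      rw [map_sum]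
      refine Finset.sum_congr rfl fun t _ => ?_
      have h1 : Pi.single t (v t) = v t • (Pi.single t (1:ℝ) : (Fin r → Fin 6) → ℝ) := by
        rw [← Pi.single_smul, smul_eq_mul, mul_one]
      rw [h1, f.map_smul, smul_eq_mul]
    have hf0 : ∀ θ : Simplex6, f (m θ) = 0 := by
      intro θ
      have hmθ : m θ ∈ W := Submodule.subset_span ⟨θ, rfl⟩
      show g (W.mkQ (m θ)) = 0
      rw [Submodule.mkQ_apply, (Submodule.Quotient.mk_eq_zero W).mpr hmθ, map_zero]
    have hc : ∀ θ : Simplex6, ∑ t, c t * ∏ k, θ.1 (t k) = 0 := by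
      intro θ
      have h2 := hf0 θ
      rw [hrepr] at h2
      exact (Finset.sum_congr rfl fun t _ => mul_comm _ _).trans h2
    have hkey := key_annihilate c P hc hPexch
    have hfP : f P = 0 := by
      rw [hrepr]
      exact (Finset.sum_congr rfl fun t _ => mul_comm _ _).trans hkey
    exact hg hfP
  rw [Submodule.mem_span_set'] at hmem
  obtain ⟨n, a, gg, hsum⟩ := hmem
  set Θi : Fin n → Simplex6 := fun i => Classical.choose (gg i).2 with hΘi
  have hΘspec : ∀ i, m (Θi i) = (gg i : (Fin r → Fin 6) → ℝ) := fun i => Classical.choose_spec (gg i).2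
  have hPt : ∀ t, P t = ∑ i : Fin n, a i * ∏ k, (Θi i).1 (t k) := by
    intro t
    rw [← hsum]
    simp only [Finset.sum_apply, Pi.smul_apply, smul_eq_mul]
    refine Finset.sum_congr rfl fun i _ => ?_
    rw [← hΘspec i]
  -- total mass of each product function is 1
  have hmass1 : ∀ θ : Simplex6, ∑ t : Fin r → Fin 6, (∏ k, θ.1 (t k)) = 1 := by
    intro θ
    have := Finset.prod_univ_sum (fun _ : Fin r => (Finset.univ : Finset (Fin 6)))
      (fun _ j => θ.1 j)
    rw [Fintype.piFinset_univ] at this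
    rw [← this]
    rw [Finset.prod_congr rfl fun k _ => θ.2.2, Finset.prod_const, one_pow]
  have hsuma : ∑ i : Fin n, a i = 1 := by
    have : (1:ℝ) = ∑ t, P t := hPsum.symm
    rw [Finset.sum_congr rfl fun t _ => hPt t, Finset.sum_comm] at this
    rw [this]
    refine Finset.sum_congr rfl fun i _ => ?_
    rw [← Finset.mul_sum, hmass1 (Θi i), mul_one]
  -- the measures
  set μp : Measure Simplex6 := ∑ i : Fin n, ENNReal.ofReal (a i) • Measure.dirac (Θi i) with hμp
  set μm : Measure Simplex6 := ∑ i : Fin n, ENNReal.ofReal (-a i) • Measure.dirac (Θi i) with hμm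
  have happly : ∀ (b : Fin n → ℝ),
      ((∑ i : Fin n, ENNReal.ofReal (b i) • Measure.dirac (Θi i)) Set.univ)
        = ∑ i : Fin n, ENNReal.ofReal (b i) := by
    intro b
    rw [Measure.finset_sum_apply]
    refine Finset.sum_congr rfl fun i _ => ?_
    rw [Measure.smul_apply, measure_univ, smul_eq_mul, mul_one]
  have htoReal : ∀ (b : Fin n → ℝ),
      (((∑ i : Fin n, ENNReal.ofReal (b i) • Measure.dirac (Θi i)) : Measure Simplex6)
        Set.univ).toReal = ∑ i : Fin n, max (b i) 0 := by
    intro b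
    rw [happly b, ENNReal.toReal_sum (fun i _ => ENNReal.ofReal_ne_top)]
    exact Finset.sum_congr rfl fun i _ => ENNReal.toReal_ofReal'
  have hfin : ∀ (b : Fin n → ℝ),
      IsFiniteMeasure ((∑ i : Fin n, ENNReal.ofReal (b i) • Measure.dirac (Θi i)) : Measure Simplex6) := by
    intro b
    constructor
    rw [happly b]
    exact ENNReal.sum_lt_top.mpr fun i _ => ENNReal.ofReal_lt_top
  have hint : ∀ (b : Fin n → ℝ) (t : Fin r → Fin 6),
      (∫ θ : Simplex6, ∏ k : Fin r, (θ : Fin 6 → ℝ) (t k)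
        ∂((∑ i : Fin n, ENNReal.ofReal (b i) • Measure.dirac (Θi i)) : Measure Simplex6))
      = ∑ i : Fin n, max (b i) 0 * ∏ k, (Θi i).1 (t k) := by
    intro b t
    rw [integral_finset_sum_measure (fun i _ =>
      (integrable_dirac_simple (fun θ : Simplex6 => ∏ k : Fin r, (θ : Fin 6 → ℝ) (t k))
        (Θi i)).smul_measure ENNReal.ofReal_ne_top)]
    refine Finset.sum_congr rfl fun i _ => ?_
    rw [integral_smul_measure, integral_dirac, ENNReal.toReal_ofReal', smul_eq_mul]
  refine ⟨μp, μm, hfin _, hfin _, ?_, ?_⟩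
  · rw [hμp, hμm, htoReal, htoReal, ← Finset.sum_sub_distrib]
    rw [Finset.sum_congr rfl fun i _ => max_zero_sub_max_neg_zero_eq_self (a i)]
    exact hsuma
  · intro t
    rw [hμp, hμm, hint a t, hint (fun i => -a i) t, ← Finset.sum_sub_distrib, hPt t]
    refine Finset.sum_congr rfl fun i _ => ?_
    rw [← sub_mul, max_zero_sub_max_neg_zero_eq_self (a i)]
end

section
/- Let r ≥ 1 and let P be an exchangeable probability mass function on (Fin 6)^r. Then there exists a linear functional L : B_r → ℝ on the space B_r of real polynomials in θ₁,…,θ₅ of total degree at most r such that (i) for every g ∈ B_r and every c ∈ ℝ with g − c ∈ B_r⁺, one has L(g) ≥ c, and (ii) for every t : Fin r → Fin 6, P(t) = L(∏_{i=1}^{5} θ_i^{n_i(t)} · (1 − θ₁ − ⋯ − θ₅)^{n_6(t)}), where n_i(t) is the number of indices k with t(k) = i. -/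
/-!
Homogenizing `θᵢ ↦ xᵢ / (x₀ + ⋯ + x₅)` sends `bernPoly n` with `∑ n = r` to the monomial
`xⁿ / (x₀ + ⋯ + x₅) ^ r`, so the Bernstein polynomials of degree `r` are linearly independent.
Exchangeability makes `P t` a function of the count vector of `t` alone, hence some linear
functional `Λ` sends `bernPoly (countVec t)` to `P t`. As
`∑ₜ bernPoly (countVec t) = (θ₁ + ⋯ + θ₅ + (1 - θ₁ - ⋯ - θ₅)) ^ r = 1`, we get `Λ 1 = ∑ P = 1`,
and `Λ` is nonnegative on the Bernstein cone because `P` is nonnegative.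
-/

open MvPolynomial

/-- The Bernstein basis polynomial of exponent vector `n`. -/
noncomputable def bernPoly (n : Fin 6 → ℕ) : MvPolynomial (Fin 5) ℝ :=
  (∏ i : Fin 5, (X i : MvPolynomial (Fin 5) ℝ) ^ n i.castSucc) *
    (1 - ∑ i : Fin 5, (X i : MvPolynomial (Fin 5) ℝ)) ^ n (Fin.last 5)

lemma totalDegree_bernstein_le (n : Fin 6 → ℕ) :
    (bernPoly n).totalDegree ≤ ∑ i, n i := by
  classical
  have hX : ∀ i : Fin 5, ((X i : MvPolynomial (Fin 5) ℝ) ^ n i.castSucc).totalDegree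
      ≤ n i.castSucc := by
    intro i
    calc ((X i : MvPolynomial (Fin 5) ℝ) ^ n i.castSucc).totalDegree
        ≤ n i.castSucc * (X i : MvPolynomial (Fin 5) ℝ).totalDegree :=
          totalDegree_pow _ _
      _ = n i.castSucc := by rw [totalDegree_X, mul_one]
  have h1 : (∏ i : Fin 5, (X i : MvPolynomial (Fin 5) ℝ) ^ n i.castSucc).totalDegree
      ≤ ∑ i : Fin 5, n i.castSucc :=
    le_trans (totalDegree_finset_prod _ _) (Finset.sum_le_sum fun i _ => hX i)
  have hsum : (∑ i : Fin 5, (X i : MvPolynomial (Fin 5) ℝ)).totalDegree ≤ 1 := by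
    refine le_trans (totalDegree_finset_sum _ _) ?_
    exact Finset.sup_le fun i _ => by rw [totalDegree_X]
  have h2 : ((1 : MvPolynomial (Fin 5) ℝ) - ∑ i : Fin 5, X i).totalDegree ≤ 1 := by
    refine le_trans (totalDegree_sub _ _) ?_
    simp only [totalDegree_one, sup_le_iff]
    exact ⟨Nat.zero_le 1, hsum⟩
  have h3 : (((1 : MvPolynomial (Fin 5) ℝ) - ∑ i : Fin 5, X i) ^ n (Fin.last 5)).totalDegree
      ≤ n (Fin.last 5) := by
    calc (((1 : MvPolynomial (Fin 5) ℝ) - ∑ i : Fin 5, X i) ^ n (Fin.last 5)).totalDegree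
        ≤ n (Fin.last 5) * ((1 : MvPolynomial (Fin 5) ℝ) - ∑ i : Fin 5, X i).totalDegree :=
          totalDegree_pow _ _
      _ ≤ n (Fin.last 5) * 1 := Nat.mul_le_mul_left _ h2
      _ = n (Fin.last 5) := mul_one _
  calc (bernPoly n).totalDegree
      ≤ (∏ i : Fin 5, (X i : MvPolynomial (Fin 5) ℝ) ^ n i.castSucc).totalDegree +
        (((1 : MvPolynomial (Fin 5) ℝ) - ∑ i : Fin 5, X i) ^ n (Fin.last 5)).totalDegree :=
        totalDegree_mul _ _
    _ ≤ (∑ i : Fin 5, n i.castSucc) + n (Fin.last 5) := Nat.add_le_add h1 h3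
    _ = ∑ i : Fin 6, n i := (Fin.sum_univ_castSucc n).symm

/-- The count vector of a sequence of `r` die rolls. -/
def countVec {r : ℕ} (t : Fin r → Fin 6) : Fin 6 → ℕ :=
  fun i => (Finset.univ.filter fun k => t k = i).card

lemma sum_countVec {r : ℕ} (t : Fin r → Fin 6) : ∑ i, countVec t i = r := by
  classical
  have := Finset.card_eq_sum_card_fiberwise
    (f := t) (s := Finset.univ) (t := Finset.univ) (fun x _ => Finset.mem_univ _)
  simpa [countVec] using this.symm

lemma bernPoly_countVec_mem {r : ℕ} (t : Fin r → Fin 6) :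
    bernPoly (countVec t) ∈ restrictTotalDegree (Fin 5) ℝ r := by
  rw [mem_restrictTotalDegree]
  calc (bernPoly (countVec t)).totalDegree ≤ ∑ i, countVec t i :=
        totalDegree_bernstein_le _
    _ = r := sum_countVec t

/-- The Bernstein cone `B_r⁺`: nonnegative combinations of degree-`r`
Bernstein basis polynomials. -/
noncomputable def bernCone (r : ℕ) : Set (MvPolynomial (Fin 5) ℝ) :=
  {g | ∃ u : (Fin 6 → ℕ) → ℝ, (∀ n, 0 ≤ u n) ∧
        g = ∑ n ∈ Finset.Nat.antidiagonalTuple 6 r, u n • bernPoly n}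

theorem LinearIndepOn.exists_linearMap_apply_eq {K V W ι : Type*} [DivisionRing K]
    [AddCommGroup V] [Module K V] [AddCommGroup W] [Module K W] {v : ι → V} {s : Set ι}
    (hv : LinearIndepOn K v s) (w : ι → W) : ∃ Λ : V →ₗ[K] W, ∀ i ∈ s, Λ (v i) = w i := by
  obtain ⟨Λ, hΛ⟩ :=
    LinearMap.exists_extend (Finsupp.linearCombination K (fun i : s => w i) ∘ₗ hv.repr)
  refine ⟨Λ, fun i hi => ?_⟩
  have hrepr := hv.repr_eq_single ⟨i, hi⟩ ⟨v i, Submodule.subset_span ⟨⟨i, hi⟩, rfl⟩⟩ rfl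
  simpa [hrepr] using LinearMap.congr_fun hΛ ⟨v i, Submodule.subset_span ⟨⟨i, hi⟩, rfl⟩⟩

theorem Equiv.Perm.exists_comp_eq_of_card_fiber_eq {α β : Type*} [Fintype α] [DecidableEq β]
    {t t' : α → β} (h : ∀ b, Fintype.card {a // t a = b} = Fintype.card {a // t' a = b}) :
    ∃ σ : Equiv.Perm α, t ∘ σ = t' := by
  have e : ∀ b, {a // t' a = b} ≃ {a // t a = b} := fun b => Fintype.equivOfCardEq (h b).symm
  refine ⟨(Equiv.sigmaFiberEquiv t').symm.trans
    ((Equiv.sigmaCongrRight e).trans (Equiv.sigmaFiberEquiv t)), funext fun a => ?_⟩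
  exact (e (t' a) ⟨a, rfl⟩).2

theorem MvPolynomial.sum_X_ne_zero {σ R : Type*} [Fintype σ] [Nonempty σ] [CommSemiring R]
    [Nontrivial R] : (∑ i : σ, X i : MvPolynomial σ R) ≠ 0 := by
  classical
  obtain ⟨i⟩ := ‹Nonempty σ›
  intro h
  simpa [coeff_sum, coeff_X, Finsupp.single_left_inj] using congrArg (coeff (Finsupp.single i 1)) h

noncomputable def baryCoord : Fin 6 → MvPolynomial (Fin 5) ℝ :=
  Fin.lastCases (1 - ∑ i : Fin 5, X i) X

lemma baryCoord_castSucc (i : Fin 5) : baryCoord i.castSucc = X i := Fin.lastCases_castSucc ..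

lemma baryCoord_last : baryCoord (Fin.last 5) = 1 - ∑ i : Fin 5, X i := Fin.lastCases_last ..

lemma sum_baryCoord : ∑ j, baryCoord j = 1 := by
  rw [Fin.sum_univ_castSucc, baryCoord_last]
  simp [baryCoord_castSucc]

lemma bernPoly_eq_prod_baryCoord (n : Fin 6 → ℕ) : bernPoly n = ∏ j, baryCoord j ^ n j := by
  rw [Fin.prod_univ_castSucc, baryCoord_last]
  simp [bernPoly, baryCoord_castSucc]

lemma aeval_bernPoly {A : Type*} [CommRing A] [Algebra ℝ A] {y : Fin 6 → A}
    (hy : ∑ j, y j = 1) (n : Fin 6 → ℕ) :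
    aeval (fun i => y i.castSucc) (bernPoly n) = ∏ j, y j ^ n j := by
  have hbary : ∀ j, aeval (fun i => y i.castSucc) (baryCoord j) = y j := by
    refine Fin.lastCases ?_ fun i => by simp [baryCoord_castSucc]
    rw [Fin.sum_univ_castSucc] at hy
    rw [baryCoord_last]
    simp [← hy]
  simp [bernPoly_eq_prod_baryCoord, hbary]

lemma prod_apply_eq_prod_pow_countVec {r : ℕ} {M : Type*} [CommMonoid M] (y : Fin 6 → M)
    (t : Fin r → Fin 6) : ∏ k, y (t k) = ∏ j, y j ^ countVec t j := by
  classical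
  rw [← Finset.prod_fiberwise' Finset.univ t y]
  exact Finset.prod_congr rfl fun j _ => Finset.prod_const _

lemma sum_bernPoly_countVec (r : ℕ) : ∑ t : Fin r → Fin 6, bernPoly (countVec t) = 1 := by
  simp_rw [bernPoly_eq_prod_baryCoord, ← prod_apply_eq_prod_pow_countVec]
  rw [← Fintype.prod_sum (fun _ => baryCoord), sum_baryCoord, Finset.prod_const_one]

theorem linearIndepOn_bernPoly (r : ℕ) :
    LinearIndepOn ℝ bernPoly (Finset.Nat.antidiagonalTuple 6 r : Set (Fin 6 → ℕ)) := by
  let K := FractionRing (MvPolynomial (Fin 6) ℝ)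
  let toFrac : MvPolynomial (Fin 6) ℝ →ₐ[ℝ] K := IsScalarTower.toAlgHom ℝ _ K
  have hinj : Function.Injective toFrac := IsFractionRing.injective _ K
  set s := toFrac (∑ j, X j)
  have hs : s ≠ 0 := (map_ne_zero_iff _ hinj).2 sum_X_ne_zero
  set y : Fin 6 → K := fun j => toFrac (X j) / s
  have hy : ∑ j, y j = 1 := by rw [← Finset.sum_div, ← map_sum, div_self hs]
  let ψ : MvPolynomial (Fin 5) ℝ →ₗ[ℝ] K :=
    LinearMap.mulLeft ℝ (s ^ r) ∘ₗ (aeval fun i => y i.castSucc).toLinearMap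
  have hψ : ∀ n ∈ Finset.Nat.antidiagonalTuple 6 r,
      ψ (bernPoly n) = toFrac (monomial (Finsupp.equivFunOnFinite.symm n) 1) := by
    intro n hn
    rw [Finset.Nat.mem_antidiagonalTuple] at hn
    simp only [ψ, LinearMap.comp_apply, AlgHom.toLinearMap_apply, LinearMap.mulLeft_apply,
      aeval_bernPoly hy, y, div_pow, Finset.prod_div_distrib, Finset.prod_pow_eq_pow_sum, hn,
      mul_div_cancel₀ _ (pow_ne_zero r hs), ← map_pow, ← map_prod, monomial_eq, C_1, one_mul,
      Finsupp.prod_pow, Finsupp.coe_equivFunOnFinite_symm]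
  have hmono : LinearIndependent ℝ
      fun n : Fin 6 → ℕ => toFrac (monomial (Finsupp.equivFunOnFinite.symm n) 1) :=
    ((basisMonomials (Fin 6) ℝ).linearIndependent.comp _
      Finsupp.equivFunOnFinite.symm.injective).map' toFrac.toLinearMap
      (LinearMap.ker_eq_bot.2 hinj)
  exact LinearIndepOn.of_comp ψ ((linearIndepOn_congr hψ).2 (hmono.linearIndepOn _))

lemma card_fiber_eq_countVec {r : ℕ} (t : Fin r → Fin 6) (j : Fin 6) :
    Fintype.card {k // t k = j} = countVec t j := by
  simp [countVec, Fintype.card_subtype]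

lemma factorsThrough_countVec {r : ℕ} {β : Type*} {P : (Fin r → Fin 6) → β}
    (hP : ∀ (σ : Equiv.Perm (Fin r)) (t : Fin r → Fin 6), P (t ∘ σ) = P t) :
    P.FactorsThrough countVec := by
  intro t t' h
  obtain ⟨σ, rfl⟩ := Equiv.Perm.exists_comp_eq_of_card_fiber_eq (t := t) (t' := t') fun j => by
    rw [card_fiber_eq_countVec, card_fiber_eq_countVec, h]
  exact (hP σ t).symm

lemma le_of_sub_C_mem_bernCone {r : ℕ} {Λ : MvPolynomial (Fin 5) ℝ →ₗ[ℝ] ℝ} (hΛ1 : Λ 1 = 1)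
    (hΛ : ∀ n ∈ Finset.Nat.antidiagonalTuple 6 r, 0 ≤ Λ (bernPoly n))
    {g : MvPolynomial (Fin 5) ℝ} {c : ℝ} (hg : g - C c ∈ bernCone r) : c ≤ Λ g := by
  obtain ⟨u, hu, hgu⟩ := hg
  have hsub : 0 ≤ Λ (g - C c) := by
    rw [hgu, map_sum]
    refine Finset.sum_nonneg fun n hn => ?_
    rw [map_smul, smul_eq_mul]
    exact mul_nonneg (hu n) (hΛ n hn)
  rwa [map_sub, C_eq_smul_one, map_smul, hΛ1, smul_eq_mul, mul_one, sub_nonneg] at hsub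

theorem finite_exchangeable_quasiExpectation_general
    (r : ℕ) (P : (Fin r → Fin 6) → ℝ)
    (hPnonneg : ∀ t, 0 ≤ P t) (hPsum : ∑ t, P t = 1)
    (hPexch : ∀ (σ : Equiv.Perm (Fin r)) (t : Fin r → Fin 6), P (t ∘ σ) = P t) :
    ∃ L : (restrictTotalDegree (Fin 5) ℝ r) →ₗ[ℝ] ℝ,
      (∀ (g : restrictTotalDegree (Fin 5) ℝ r) (c : ℝ),
          ((g : MvPolynomial (Fin 5) ℝ) - C c) ∈ bernCone r → c ≤ L g) ∧
      (∀ t : Fin r → Fin 6,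
          P t = L ⟨bernPoly (countVec t), bernPoly_countVec_mem t⟩) := by
  set ρ := Function.extend countVec P 0
  have hρ : ∀ t, ρ (countVec t) = P t := (factorsThrough_countVec hPexch).extend_apply 0
  have hρ_nonneg : ∀ n, 0 ≤ ρ n := fun n => by
    simp only [ρ, Function.extend_def]
    split_ifs
    exacts [hPnonneg _, le_rfl]
  obtain ⟨Λ, hΛ⟩ := (linearIndepOn_bernPoly r).exists_linearMap_apply_eq ρ
  have hΛP : ∀ t, Λ (bernPoly (countVec t)) = P t := fun t => by
    rw [hΛ _ (Finset.Nat.mem_antidiagonalTuple.2 (sum_countVec t)), hρ]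
  have hΛ1 : Λ 1 = 1 := by
    simp only [← sum_bernPoly_countVec r, map_sum, hΛP, hPsum]
  refine ⟨Λ.domRestrict _, fun g c hg => ?_, fun t => (hΛP t).symm⟩
  exact le_of_sub_C_mem_bernCone hΛ1 (fun n hn => hΛ n hn ▸ hρ_nonneg n) hg

/-- **Quasi-expectation representation of finite exchangeability**
(Proposition 3): every finitely exchangeable probability mass function on
`r` rolls of a six-sided die is represented by a linear functional on the
polynomials of degree at most `r` dominating the Bernstein-cone lower bound. -/
theorem finite_exchangeable_quasiExpectation
    (r : ℕ) (hr : 1 ≤ r) (P : (Fin r → Fin 6) → ℝ)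
    (hPnonneg : ∀ t, 0 ≤ P t) (hPsum : ∑ t, P t = 1)
    (hPexch : ∀ (σ : Equiv.Perm (Fin r)) (t : Fin r → Fin 6), P (t ∘ σ) = P t) :
    ∃ L : (restrictTotalDegree (Fin 5) ℝ r) →ₗ[ℝ] ℝ,
      (∀ (g : restrictTotalDegree (Fin 5) ℝ r) (c : ℝ),
          ((g : MvPolynomial (Fin 5) ℝ) - C c) ∈ bernCone r → c ≤ L g) ∧
      (∀ t : Fin r → Fin 6,
          P t = L ⟨bernPoly (countVec t), bernPoly_countVec_mem t⟩) :=
  finite_exchangeable_quasiExpectation_general r P hPnonneg hPsum hPexch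
end

section
/- Let r ≥ 1 and let L : B_r → ℝ be a linear functional on the space B_r of real polynomials in θ₁,…,θ₅ of total degree at most r such that for every g ∈ B_r and every c ∈ ℝ with g − c ∈ B_r⁺, one has L(g) ≥ c. Define P : (Fin r → Fin 6) → ℝ by P(t) = L(∏_{i=1}^{5} θ_i^{n_i(t)} · (1 − θ₁ − ⋯ − θ₅)^{n_6(t)}), where n_i(t) is the number of indices k with t(k) = i. Then P(t) ≥ 0 for all t, ∑_t P(t) = 1, and P(t ∘ σ) = P(t) for every permutation σ ∈ Equiv.Perm (Fin r); that is, P is a well-defined exchangeable probability mass function on (Fin 6)^r. -/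
/-!
With `bernFace = (θ₁, …, θ₅, 1 - θ₁ - ⋯ - θ₅)` we have `bernPoly (countVec t) = ∏ₖ bernFace (t k)`.
This product is a single Bernstein basis polynomial, so it lies in `B_r⁺` and `L` is nonnegative
on it; it is symmetric in the rolls, so `P` is exchangeable; and summing over all `t` expands
`(∑ᵢ bernFace i) ^ r = 1`, while `L 1 = 1` because both `1 - 1` and `-1 - (-1)` lie in the cone.
-/

open MvPolynomial

lemma one_mem_restrictTotalDegree {σ R : Type*} [CommSemiring R] (m : ℕ) :
    (1 : MvPolynomial σ R) ∈ restrictTotalDegree σ R m := by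
  rw [mem_restrictTotalDegree]
  exact (totalDegree_one (σ := σ) (R := R)).le.trans (Nat.zero_le m)

noncomputable def bernFace : Fin 6 → MvPolynomial (Fin 5) ℝ :=
  Fin.snoc (fun i => X i) (1 - ∑ i : Fin 5, X i)

lemma sum_bernFace : ∑ i, bernFace i = 1 := by
  rw [Fin.sum_univ_castSucc]
  simp only [bernFace, Fin.snoc_castSucc, Fin.snoc_last, add_sub_cancel]

lemma bernPoly_eq_prod_bernFace_pow (n : Fin 6 → ℕ) : bernPoly n = ∏ i, bernFace i ^ n i := by
  rw [Fin.prod_univ_castSucc]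
  simp only [bernPoly, bernFace, Fin.snoc_castSucc, Fin.snoc_last]

lemma bernPoly_countVec_eq_prod {r : ℕ} (t : Fin r → Fin 6) :
    bernPoly (countVec t) = ∏ k, bernFace (t k) := by
  classical
  rw [bernPoly_eq_prod_bernFace_pow, ← Finset.prod_fiberwise' Finset.univ t bernFace]
  exact Finset.prod_congr rfl fun j _ => by rw [Finset.prod_const, countVec]

lemma countVec_comp_perm {r : ℕ} (σ : Equiv.Perm (Fin r)) (t : Fin r → Fin 6) :
    countVec (t ∘ σ) = countVec t := by
  funext i
  exact Finset.card_equiv σ fun k => by simp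

lemma zero_mem_bernCone (r : ℕ) : 0 ∈ bernCone r :=
  ⟨0, fun _ => le_rfl, by simp⟩

lemma bernPoly_mem_bernCone {r : ℕ} {n : Fin 6 → ℕ} (hn : ∑ i, n i = r) :
    bernPoly n ∈ bernCone r := by
  classical
  refine ⟨fun m => if m = n then 1 else 0, fun m => by positivity, ?_⟩
  simp [ite_smul, Finset.Nat.mem_antidiagonalTuple.2 hn]

def IsQuasiExpectation (r : ℕ) (L : restrictTotalDegree (Fin 5) ℝ r →ₗ[ℝ] ℝ) : Prop :=
  ∀ (g : restrictTotalDegree (Fin 5) ℝ r) (c : ℝ),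
    (g : MvPolynomial (Fin 5) ℝ) - C c ∈ bernCone r → c ≤ L g

namespace IsQuasiExpectation

variable {r : ℕ} {L : restrictTotalDegree (Fin 5) ℝ r →ₗ[ℝ] ℝ}

lemma nonneg_of_mem_bernCone (hL : IsQuasiExpectation r L)
    {g : restrictTotalDegree (Fin 5) ℝ r} (hg : (g : MvPolynomial (Fin 5) ℝ) ∈ bernCone r) :
    0 ≤ L g :=
  hL g 0 (by simpa using hg)

lemma map_one (hL : IsQuasiExpectation r L) : L ⟨1, one_mem_restrictTotalDegree r⟩ = 1 := by
  have hge := hL ⟨1, one_mem_restrictTotalDegree r⟩ 1 (by simpa using zero_mem_bernCone r)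
  have hle := hL (-⟨1, one_mem_restrictTotalDegree r⟩) (-1) (by simpa using zero_mem_bernCone r)
  rw [map_neg] at hle
  linarith

end IsQuasiExpectation

theorem quasiExpectation_defines_exchangeable_pmf_general
    (r : ℕ)
    (L : (restrictTotalDegree (Fin 5) ℝ r) →ₗ[ℝ] ℝ)
    (hL : ∀ (g : restrictTotalDegree (Fin 5) ℝ r) (c : ℝ),
        ((g : MvPolynomial (Fin 5) ℝ) - C c) ∈ bernCone r → c ≤ L g)
    (P : (Fin r → Fin 6) → ℝ)
    (hP : ∀ t : Fin r → Fin 6,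
        P t = L ⟨bernPoly (countVec t), bernPoly_countVec_mem t⟩) :
    (∀ t, 0 ≤ P t) ∧ (∑ t, P t = 1) ∧
      (∀ (σ : Equiv.Perm (Fin r)) (t : Fin r → Fin 6), P (t ∘ σ) = P t) := by
  have hL : IsQuasiExpectation r L := hL
  refine ⟨fun t => ?_, ?_, fun σ t => by simp only [hP, countVec_comp_perm]⟩
  · rw [hP]
    exact hL.nonneg_of_mem_bernCone (bernPoly_mem_bernCone (sum_countVec t))
  · calc ∑ t, P t
        = L (∑ t, ⟨bernPoly (countVec t), bernPoly_countVec_mem t⟩) := by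
          simp only [hP, map_sum]
      _ = L ⟨1, one_mem_restrictTotalDegree r⟩ := by
          congr 1
          ext1
          simp only [Submodule.coe_sum, sum_bernPoly_countVec]
      _ = 1 := hL.map_one

/-- **Quasi-expectation operators define exchangeable probabilities**
(converse part of Proposition 3): any linear functional on the polynomials of
degree at most `r` dominating the Bernstein-cone lower bound induces a
well-defined exchangeable probability mass function on `r` rolls of a
six-sided die. -/
theorem quasiExpectation_defines_exchangeable_pmf
    (r : ℕ) (hr : 1 ≤ r)
    (L : (restrictTotalDegree (Fin 5) ℝ r) →ₗ[ℝ] ℝ)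
    (hL : ∀ (g : restrictTotalDegree (Fin 5) ℝ r) (c : ℝ),
        ((g : MvPolynomial (Fin 5) ℝ) - C c) ∈ bernCone r → c ≤ L g)
    (P : (Fin r → Fin 6) → ℝ)
    (hP : ∀ t : Fin r → Fin 6,
        P t = L ⟨bernPoly (countVec t), bernPoly_countVec_mem t⟩) :
    (∀ t, 0 ≤ P t) ∧ (∑ t, P t = 1) ∧
      (∀ (σ : Equiv.Perm (Fin r)) (t : Fin r → Fin 6), P (t ∘ σ) = P t) :=
  quasiExpectation_defines_exchangeable_pmf_general r L hL P hP
end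

section
/- Let n be a nonempty finite type and let φ : Matrix n n ℂ → ℂ be a ℂ-linear functional such that for every Hermitian matrix G, φ(G) is real, and φ(G).re ≥ c for every c ∈ ℝ such that G − c•(1 : Matrix n n ℂ) is positive semidefinite. Then there exists a matrix M ∈ Matrix n n ℂ which is positive semidefinite with trace Tr(M) = 1, such that φ(G) = Tr(G * M) for every G ∈ Matrix n n ℂ. -/
open scoped ComplexOrder
open Matrix

/-! Every linear functional on matrices is `G ↦ Tr(G M)` for the matrix `M` of its values on the
matrix units. Over `ℂ` a matrix whose quadratic form takes values `≥ 0` in the complex order is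
automatically Hermitian, so `M` is positive semidefinite as soon as `φ` is nonnegative on the
rank-one projections `x x†`, which follows from the hypotheses with `c = 0`. Testing the
hypothesis on `±1` with `c = ±1` gives `Tr M = φ 1 = 1`. -/

theorem LinearMap.exists_eq_trace_mul {m n R : Type*} [Fintype m] [Fintype n] [DecidableEq m]
    [DecidableEq n] [CommSemiring R] (φ : Matrix m n R →ₗ[R] R) :
    ∃ M : Matrix n m R, ∀ G, φ G = (G * M).trace := by
  refine ⟨of fun j i => φ (Matrix.single i j 1), fun G => ?_⟩
  conv_lhs => rw [matrix_eq_sum_single G]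
  conv_rhs => rw [matrix_eq_sum_single G]
  simp only [map_sum, Matrix.sum_mul, trace_sum, trace_single_mul]
  refine Finset.sum_congr rfl fun i _ => Finset.sum_congr rfl fun j _ => ?_
  rw [of_apply, ← map_smul, smul_single, smul_eq_mul, mul_one]

namespace Matrix

variable {n : Type*} [Fintype n]

theorem trace_vecMulVec_mul {R : Type*} [CommSemiring R] (a b : n → R) (M : Matrix n n R) :
    (vecMulVec a b * M).trace = b ⬝ᵥ (M *ᵥ a) := by
  rw [vecMulVec_mul, trace_vecMulVec, dotProduct_comm, dotProduct_mulVec]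

theorem posSemidef_iff_dotProduct_mulVec_nonneg [DecidableEq n] {M : Matrix n n ℂ} :
    M.PosSemidef ↔ ∀ x, 0 ≤ star x ⬝ᵥ (M *ᵥ x) := by
  rw [← isPositive_toEuclideanLin_iff, LinearMap.isPositive_iff_complex]
  refine (EuclideanSpace.equiv n ℂ).forall_congr' fun x ↦ ?_
  have hconj : x ⬝ᵥ star (M *ᵥ x) = star (star x ⬝ᵥ (M *ᵥ x)) := by
    rw [star_dotProduct, star_star, dotProduct_comm]
  simp [EuclideanSpace.inner_eq_star_dotProduct, hconj, Complex.nonneg_iff, Complex.ext_iff,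
    eq_comm, and_comm]

theorem posSemidef_of_trace_mul_nonneg [DecidableEq n] {M : Matrix n n ℂ}
    (h : ∀ G : Matrix n n ℂ, G.PosSemidef → 0 ≤ (G * M).trace) : M.PosSemidef :=
  posSemidef_iff_dotProduct_mulVec_nonneg.mpr fun x => by
    simpa only [trace_vecMulVec_mul] using h _ (posSemidef_vecMulVec_self_star x)

end Matrix

theorem quasiExpectation_exists_densityMatrix_general
    (n : Type*) [Fintype n] [DecidableEq n]
    (φ : Matrix n n ℂ →ₗ[ℂ] ℂ)
    (hreal : ∀ G : Matrix n n ℂ, G.IsHermitian → (φ G).im = 0)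
    (hpos : ∀ G : Matrix n n ℂ, G.IsHermitian → ∀ c : ℝ,
      (G - (c : ℂ) • (1 : Matrix n n ℂ)).PosSemidef → c ≤ (φ G).re) :
    ∃ M : Matrix n n ℂ, M.PosSemidef ∧ M.trace = 1 ∧
      ∀ G : Matrix n n ℂ, φ G = (G * M).trace := by
  obtain ⟨M, hM⟩ := φ.exists_eq_trace_mul
  have hnonneg (G : Matrix n n ℂ) (hG : G.PosSemidef) : 0 ≤ φ G :=
    Complex.nonneg_iff.mpr
      ⟨by simpa using hpos G hG.isHermitian 0 (by simpa using hG), (hreal G hG.isHermitian).symm⟩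
  have hre_one : (φ 1).re = 1 := by
    refine le_antisymm ?_ (hpos 1 isHermitian_one 1 (by simp [PosSemidef.zero]))
    simpa using hpos (-1) isHermitian_one.neg (-1) (by simp [PosSemidef.zero])
  refine ⟨M, posSemidef_of_trace_mul_nonneg fun G hG => hM G ▸ hnonneg G hG, ?_, hM⟩
  rw [← one_mul M, ← hM]
  exact Complex.ext hre_one (hreal 1 isHermitian_one)

/-- **Quasi-expectation operators are represented by density matrices**
(forward direction of part 1 of Theorem 1): a linear functional on matrices
that is real on Hermitian matrices and dominates the spectral lower bound is
of the form `G ↦ Tr(G M)` for a positive semidefinite trace-one matrix `M`. -/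
theorem quasiExpectation_exists_densityMatrix
    (n : Type*) [Fintype n] [DecidableEq n] [Nonempty n]
    (φ : Matrix n n ℂ →ₗ[ℂ] ℂ)
    (hreal : ∀ G : Matrix n n ℂ, G.IsHermitian → (φ G).im = 0)
    (hpos : ∀ G : Matrix n n ℂ, G.IsHermitian → ∀ c : ℝ,
      (G - (c : ℂ) • (1 : Matrix n n ℂ)).PosSemidef → c ≤ (φ G).re) :
    ∃ M : Matrix n n ℂ, M.PosSemidef ∧ M.trace = 1 ∧
      ∀ G : Matrix n n ℂ, φ G = (G * M).trace :=
  quasiExpectation_exists_densityMatrix_general n φ hreal hpos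
end

section
/- Define P : (Fin 6 × Fin 6) → ℝ by P(i, i) = 0 for all i, and P(i, j) = 1/30 for all i ≠ j. Then P is an exchangeable probability mass function on (Fin 6)², but there is no Borel probability measure q on the simplex Θ = {θ ∈ ℝ^6 : θ_i ≥ 0, ∑_{i=1}^{6} θ_i = 1} such that P(i, j) = ∫_Θ θ_i θ_j dq(θ) for all i, j ∈ Fin 6. -/
open MeasureTheory

/-- The uniform distribution on off-diagonal pairs of die faces is a finitely
exchangeable probability mass function on two rolls which admits no de Finetti
mixture representation. -/
theorem exchangeable_without_mixture_representation
    (P : Fin 6 × Fin 6 → ℝ)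
    (hP : ∀ p : Fin 6 × Fin 6, P p = if p.1 = p.2 then 0 else 1 / 30) :
    (∀ p, 0 ≤ P p) ∧ (∑ p, P p = 1) ∧ (∀ i j, P (i, j) = P (j, i)) ∧
      ¬ ∃ q : Measure Simplex6, IsProbabilityMeasure q ∧
          ∀ i j : Fin 6,
            P (i, j) = ∫ θ : Simplex6, (θ : Fin 6 → ℝ) i * (θ : Fin 6 → ℝ) j ∂q := by
  refine ⟨?_, ?_, ?_, ?_⟩
  · intro p; rw [hP]; split <;> norm_num
  · simp only [hP]
    rw [Fintype.sum_prod_type]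
    simp [Fin.sum_univ_six]
    norm_num
  · intro i j; rw [hP, hP]; simp [eq_comm]
  · rintro ⟨q, hq, hrep⟩
    have key : ∀ i : Fin 6, ∀ᵐ θ : Simplex6 ∂q, (θ : Fin 6 → ℝ) i = 0 := by
      intro i
      have hmeas : Measurable (fun θ : Simplex6 => (θ : Fin 6 → ℝ) i) :=
        (measurable_pi_apply i).comp measurable_subtype_coe
      have hint : Integrable
          (fun θ : Simplex6 => (θ : Fin 6 → ℝ) i * (θ : Fin 6 → ℝ) i) q := by
        refine Integrable.mono' (integrable_const 1)
          (hmeas.mul hmeas).aestronglyMeasurable ?_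
        filter_upwards with θ
        have h0 := θ.2.1 i
        have h1 : (θ : Fin 6 → ℝ) i ≤ 1 := by
          calc (θ : Fin 6 → ℝ) i ≤ ∑ j, (θ : Fin 6 → ℝ) j :=
                Finset.single_le_sum (fun j _ => θ.2.1 j) (Finset.mem_univ i)
            _ = 1 := θ.2.2
        rw [Real.norm_eq_abs, abs_of_nonneg (mul_nonneg h0 h0)]
        nlinarith
      have hzero : ∫ θ : Simplex6, (θ : Fin 6 → ℝ) i * (θ : Fin 6 → ℝ) i ∂q = 0 := by
        rw [← hrep i i, hP]; simp
      have hae := (integral_eq_zero_iff_of_nonneg (fun θ => mul_self_nonneg _) hint).mp hzero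
      filter_upwards [hae] with θ hθ
      exact mul_self_eq_zero.mp hθ
    have hsum : ∀ᵐ θ : Simplex6 ∂q, ∑ i, (θ : Fin 6 → ℝ) i = 0 := by
      filter_upwards [ae_all_iff.mpr key] with θ hθ
      simp [hθ]
    obtain ⟨θ, hθ⟩ := hsum.exists
    have := θ.2.2
    linarith
end

section
/- Define P : (Fin 2 × Fin 2) → ℝ by P(0,0) = P(1,1) = 0 and P(0,1) = P(1,0) = 1/2 (drawing two balls without replacement from an urn with one black and one white ball). Then P is an exchangeable probability mass function on (Fin 2)², but there is no probability mass function Q : (Fin 2 × Fin 2 × Fin 2) → ℝ that is invariant under all permutations of its three coordinates and satisfies P(a, b) = Q(a, b, 0) + Q(a, b, 1) for all a, b ∈ Fin 2. That is, P is finitely but not infinitely exchangeable: it admits no exchangeable extension to three variables. -/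
/-- Drawing two balls without replacement from an urn with one black and one
white ball gives an exchangeable probability mass function on two variables
that admits no exchangeable extension to three variables: it is finitely but
not infinitely exchangeable. -/
theorem urn_finitely_not_infinitely_exchangeable
    (P : Fin 2 × Fin 2 → ℝ)
    (hP : ∀ a b : Fin 2, P (a, b) = if a = b then 0 else 1 / 2) :
    (∀ p, 0 ≤ P p) ∧ (∑ p, P p = 1) ∧ (∀ a b, P (a, b) = P (b, a)) ∧
      ¬ ∃ Q : Fin 2 × Fin 2 × Fin 2 → ℝ,
          (∀ x, 0 ≤ Q x) ∧ (∑ x, Q x = 1) ∧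
          (∀ (σ : Equiv.Perm (Fin 3)) (a b c : Fin 2),
            Q (![a, b, c] (σ 0), ![a, b, c] (σ 1), ![a, b, c] (σ 2)) = Q (a, b, c)) ∧
          (∀ a b : Fin 2, P (a, b) = Q (a, b, 0) + Q (a, b, 1)) := by
  refine ⟨?_, ?_, ?_, ?_⟩
  · rintro ⟨a, b⟩
    rw [hP]
    split <;> norm_num
  · rw [Fintype.sum_prod_type]
    simp only [hP]
    norm_num [Fin.sum_univ_succ]
  · intro a b
    rw [hP, hP]
    fin_cases a <;> fin_cases b <;> simp
  · rintro ⟨Q, hpos, hsum, hperm, hmarg⟩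
    have h00 : P (0, 0) = 0 := by rw [hP]; simp
    have h11 : P (1, 1) = 0 := by rw [hP]; simp
    have e0 := hmarg 0 0
    have e1 := hmarg 1 1
    rw [h00] at e0
    rw [h11] at e1
    have q001 : Q (0, 0, 1) = 0 := by
      have := hpos (0, 0, 0); have := hpos (0, 0, 1); linarith
    have q110 : Q (1, 1, 0) = 0 := by
      have := hpos (1, 1, 0); have := hpos (1, 1, 1); linarith
    have q010 : Q (0, 1, 0) = Q (0, 0, 1) := by
      have := hperm (Equiv.swap 1 2) 0 0 1
      simpa [Equiv.swap_apply_def, Fin.ext_iff] using this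
    have q011 : Q (0, 1, 1) = Q (1, 0, 1) := by
      have := hperm (Equiv.swap 0 1) 1 0 1
      simpa [Equiv.swap_apply_def, Fin.ext_iff] using this
    have q101 : Q (1, 0, 1) = Q (1, 1, 0) := by
      have := hperm (Equiv.swap 1 2) 1 1 0
      simpa [Equiv.swap_apply_def, Fin.ext_iff] using this
    have e01 := hmarg 0 1
    rw [hP] at e01
    simp only [q010, q011, q101, q001, q110] at e01
    norm_num at e01
end
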